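/- Suppose λ = λ' is a self-conjugate partition of n and w ∈ A_n is an even permutation. Then χ^{λ±}_A(A_w) = (1/2)(χ^λ(T_w) ± χ^λ(T_w τ)), where A_w = (1/2)(T_w + T_w^#) and χ^λ(T_w τ) is the trace on S(λ) of right multiplication by T_w composed with τ. -/

import Mathlib

open scoped Classical

noncomputable section

/-- The simple transposition swapping `i` and `i+1` (0-indexed; this is the Coxeter
generator `s_{i+1}` in 1-indexed notation) in the symmetric group on `Fin n`. -/
def sTr (n i : ℕ) : Equiv.Perm (Fin n) :=
  if h : i + 1 < n then Equiv.swap ⟨i, Nat.lt_of_succ_lt h⟩ ⟨i + 1, h⟩ else 1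

/-- The Coxeter length: the minimal length of an expression of `w` as a product of
simple transpositions. -/
def len (n : ℕ) (w : Equiv.Perm (Fin n)) : ℕ :=
  sInf {k | ∃ l : List ℕ, l.length = k ∧ (∀ i ∈ l, i + 1 < n) ∧ w = (l.map (sTr n)).prod}

/-- The (strict) Bruhat order on the symmetric group: `y < z` iff `z` can be obtained
from `y` by successively multiplying by reflections, increasing the length at each step. -/
def bruhatLT (n : ℕ) (y z : Equiv.Perm (Fin n)) : Prop :=
  Relation.TransGen
    (fun a b => (∃ u v : Fin n, u ≠ v ∧ b = a * Equiv.swap u v) ∧ len n a < len n b) y z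

/-- `y ≺ z` iff `y < z` in the Bruhat order and `ℓ(y) ≢ ℓ(z) (mod 2)`. -/
def precLT (n : ℕ) (y z : Equiv.Perm (Fin n)) : Prop :=
  bruhatLT n y z ∧ ¬ (len n y % 2 = len n z % 2)

/-- The element `A_z = ½(T_z + ε_z T_z^#)`. -/
def Aelt {R H : Type*} [CommRing R] [Ring H] [Algebra R H] (n : ℕ)
    (T : Equiv.Perm (Fin n) → H) (hash : H ≃ₐ[R] H) (z : Equiv.Perm (Fin n)) : H :=
  Ring.inverse (2 : R) • (T z + ((-1 : R) ^ len n z) • hash (T z))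

/-- The `ε`-eigenspace `H^ε = {h ∈ H : h^# = ε h}` of an algebra automorphism,
viewed as an `R`-submodule. -/
def fixedSubmodule {R H : Type*} [CommRing R] [Ring H] [Algebra R H]
    (φ : H ≃ₐ[R] H) (ε : R) : Submodule R H where
  carrier := {x | φ x = ε • x}
  add_mem' := by
    intro a b ha hb
    simp only [Set.mem_setOf_eq] at *
    rw [map_add, ha, hb, smul_add]
  zero_mem' := by simp
  smul_mem' := by
    intro c a ha
    simp only [Set.mem_setOf_eq] at *
    rw [map_smul, ha, smul_smul, smul_smul, mul_comm]

/-- The quantum integer `[k] = q + q³ + ⋯ + q^{2k−1}` for `k ≥ 0`, and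
`[k] = −q⁻¹ − q⁻³ − ⋯ − q^{2k+1}` for `k < 0`. -/
def qint {F : Type*} [Field F] (q : F) : ℤ → F
  | Int.ofNat k => ∑ j ∈ Finset.range k, q ^ (2 * j + 1)
  | Int.negSucc k => -∑ j ∈ Finset.range (k + 1), (q ^ (2 * j + 1))⁻¹

/-- The coefficients `α_k = √(−1)·√([k+1])·√([k−1])/[k]` for `k > 0`, with
`α_{−k} = −α_k` (and `α_0 = 0`). -/
def alph {F : Type*} [Field F] (q sqm1 : F) (sq : ℕ → F) (m : ℤ) : F :=
  if 0 ≤ m then sqm1 * sq (m.toNat + 1) * sq (m.toNat - 1) / qint q m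
  else -(sqm1 * sq ((-m).toNat + 1) * sq ((-m).toNat - 1) / qint q (-m))

/-- A standard `μ`-tableau, recorded by the positions of its entries: `pos k` is the
cell containing the entry `k+1`.  Standardness means the entries are distinct cells
of `μ` and `t(r,c) < t(s,d)` whenever `(r,c) ≠ (s,d)`, `r ≤ s` and `c ≤ d`. -/
def IsStdTab (μ : YoungDiagram) {n : ℕ} (pos : Fin n → ℕ × ℕ) : Prop :=
  Function.Injective pos ∧ (∀ k, pos k ∈ μ) ∧
    ∀ j k : Fin n, (pos j).1 ≤ (pos k).1 → (pos j).2 ≤ (pos k).2 → pos j ≠ pos k → j < k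

/-- The type of standard `μ`-tableaux with `n` entries. -/
def StdTab (μ : YoungDiagram) (n : ℕ) : Type :=
  {pos : Fin n → ℕ × ℕ // IsStdTab μ pos}

/-- The content `c_t(m+1) = c − r` of the entry `m+1`, located in cell `(r, c)`
(and junk value `0` when `m ≥ n`). -/
def contN {n : ℕ} (pos : Fin n → ℕ × ℕ) (m : ℕ) : ℤ :=
  if h : m < n then ((pos ⟨m, h⟩).2 : ℤ) - ((pos ⟨m, h⟩).1 : ℤ) else 0

/-- The axial distance `ρ_t(i+1) = c_t(i+1) − c_t(i+2)` (0-indexed `i`). -/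
def rhoAx {n : ℕ} (pos : Fin n → ℕ × ℕ) (i : ℕ) (hi : i + 1 < n) : ℤ :=
  (((pos ⟨i, Nat.lt_of_succ_lt hi⟩).2 : ℤ) - ((pos ⟨i, Nat.lt_of_succ_lt hi⟩).1 : ℤ))
    - (((pos ⟨i + 1, hi⟩).2 : ℤ) - ((pos ⟨i + 1, hi⟩).1 : ℤ))

/-- The tableau `t·s_{i+1}`, obtained from `t` by swapping the entries `i+1`, `i+2`. -/
def swapEnt {n : ℕ} (pos : Fin n → ℕ × ℕ) (i : ℕ) (hi : i + 1 < n) : Fin n → ℕ × ℕ :=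
  pos ∘ (Equiv.swap ⟨i, Nat.lt_of_succ_lt hi⟩ ⟨i + 1, hi⟩)

/-- The conjugate of a tableau: the entry in cell `(r,c)` moves to cell `(c,r)`. -/
def conjPos {n : ℕ} (pos : Fin n → ℕ × ℕ) : Fin n → ℕ × ℕ :=
  fun k => ((pos k).2, (pos k).1)

lemma isStdTab_conj {μ : YoungDiagram} {n : ℕ} {pos : Fin n → ℕ × ℕ}
    (h : IsStdTab μ pos) : IsStdTab μ.transpose (conjPos pos) := by
  obtain ⟨hinj, hmem, hord⟩ := h
  refine ⟨?_, ?_, ?_⟩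
  · intro a b hab
    apply hinj
    have h1 : ((pos a).2, (pos a).1) = ((pos b).2, (pos b).1) := hab
    have h2 := congrArg Prod.snd h1
    have h3 := congrArg Prod.fst h1
    simp only at h2 h3
    exact Prod.ext h2 h3
  · intro k
    rw [YoungDiagram.mem_transpose]
    exact hmem k
  · intro j k h1 h2 hne
    refine hord j k h2 h1 ?_
    intro hc
    exact hne (by rw [conjPos, conjPos, hc])

/-- The conjugate standard tableau `t' ∈ Std(μ')` of `t ∈ Std(μ)`. -/
def conjTab {μ : YoungDiagram} {n : ℕ} (t : StdTab μ n) : StdTab μ.transpose n :=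
  ⟨conjPos t.val, isStdTab_conj t.prop⟩

/-- The conjugate standard tableau, going from `Std(μ')` back to `Std(μ)`. -/
def backConjTab {μ : YoungDiagram} {n : ℕ} (s : StdTab μ.transpose n) : StdTab μ n :=
  ⟨conjPos s.val, by
    have h := isStdTab_conj s.prop
    rwa [YoungDiagram.transpose_transpose] at h⟩

/-- The linear map `τ : S(μ') → S(μ)` with `v_s ↦ v_{s'}`. -/
def crossTau (F : Type*) [Field F] (μ : YoungDiagram) (n : ℕ) :
    (StdTab μ.transpose n → F) →ₗ[F] (StdTab μ n → F) where
  toFun f := fun t => f (conjTab t)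
  map_add' _ _ := rfl
  map_smul' _ _ := rfl

/-- The linear map `τ : S(μ) → S(μ')` with `v_t ↦ v_{t'}`. -/
def fwdTau (F : Type*) [Field F] (μ : YoungDiagram) (n : ℕ) :
    (StdTab μ n → F) →ₗ[F] (StdTab μ.transpose n → F) where
  toFun f := fun s => f (backConjTab s)
  map_add' _ _ := rfl
  map_smul' _ _ := rfl

/-- For a self-conjugate shape, the conjugate tableau `t'` of `t`, as a standard
tableau of the same shape. -/
def selfConjTab {μ : YoungDiagram} (hself : μ.transpose = μ) {n : ℕ}
    (t : StdTab μ n) : StdTab μ n :=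
  ⟨conjPos t.val, by have h := isStdTab_conj t.prop; rwa [hself] at h⟩

/-- For a self-conjugate shape, the linear involution `τ` of `S(μ)` with `v_t ↦ v_{t'}`. -/
def selfTau {F : Type*} [Field F] {μ : YoungDiagram} (hself : μ.transpose = μ) (n : ℕ) :
    (StdTab μ n → F) →ₗ[F] (StdTab μ n → F) where
  toFun f := fun t => f (selfConjTab hself t)
  map_add' _ _ := rfl
  map_smul' _ _ := rfl

/-- `act` is the (right) seminormal representation of the Hecke algebra on the Specht
module `S(μ)`, with basis `{v_t}` indexed by the standard `μ`-tableaux, on which the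
generators act by `v_t T_i = (−1/[ρ_t(i)]) v_t + α_t(i) v_{t·s_i}`. -/
def SpechtRep {F : Type*} [Field F] (q sqm1 : F) (sq : ℕ → F) (n : ℕ)
    {H : Type*} [Ring H] [Algebra F H] (T : Equiv.Perm (Fin n) → H)
    (μ : YoungDiagram) (act : H →ₗ[F] Module.End F (StdTab μ n → F)) : Prop :=
  act 1 = 1 ∧ (∀ a b : H, act (a * b) = act b * act a) ∧
    ∀ (i : ℕ) (hi : i + 1 < n) (t : StdTab μ n),
      act (T (sTr n i)) (Pi.single t (1 : F) : StdTab μ n → F) =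
        (-(qint q (rhoAx t.val i hi))⁻¹) • (Pi.single t (1 : F) : StdTab μ n → F) +
          (if h : IsStdTab μ (swapEnt t.val i hi) then
            alph q sqm1 sq (rhoAx t.val i hi) •
              (Pi.single (⟨swapEnt t.val i hi, h⟩ : StdTab μ n) (1 : F) : StdTab μ n → F)
           else 0)

/-!
On `S(λ)` the involution `τ : v_t ↦ v_{t'}` realises the automorphism `#`. Conjugating the
seminormal form of `T_i` by `τ` replaces the axial distance `ρ` by `-ρ`; since
`α_{-ρ} = -α_ρ` and `-1/[-ρ] = 1/[ρ] + q - q⁻¹`, this gives `τ T_i τ = (q - q⁻¹) - T_i = T_i^#`.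
Both sides of `T_w ↦ τ T_w τ = T_w^#` are multiplicative, and the `T_w` lie in the algebra
generated by the `T_i`, so the identity holds for all `w`. Hence `A_w = ½(T_w + τ T_w τ)`
commutes with `τ` and preserves its eigenspaces `S(λ)^± = ker(τ ∓ 1)`; computing the trace
through the projection `½(1 ± τ)` and using `τ² = 1` and cyclicity of the trace gives
`½(tr T_w ± tr τ T_w)`.
-/

section QuantumIntegers

variable {F : Type*} [Field F] (q : F)

lemma qint_natCast (k : ℕ) : qint q k = ∑ j ∈ Finset.range k, q ^ (2 * j + 1) := rfl

lemma sub_one_mul_qint (k : ℕ) : (q ^ 2 - 1) * qint q k = (q ^ (2 * k) - 1) * q := by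
  induction k with
  | zero => simp [qint]
  | succ k ih =>
    rw [qint_natCast] at ih ⊢
    rw [Finset.sum_range_succ, mul_add, ih]
    ring

lemma qint_negSucc (hq : q ≠ 0) (m : ℕ) :
    qint q (Int.negSucc m) = -(q ^ (2 * (m + 1)))⁻¹ * qint q (m + 1 : ℕ) := by
  rw [qint_natCast, qint, neg_mul, neg_inj, Finset.mul_sum, ← Finset.sum_range_reflect]
  refine Finset.sum_congr rfl fun j hj => ?_
  have hj : j ≤ m := Nat.lt_succ_iff.mp (Finset.mem_range.mp hj)
  rw [show 2 * (m + 1) = (2 * (m + 1 - 1 - j) + 1) + (2 * j + 1) by omega,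
    pow_add q (2 * (m + 1 - 1 - j) + 1), mul_inv, mul_assoc, inv_mul_cancel₀ (pow_ne_zero _ hq),
    mul_one]

/-- The identity behind `τ T_i τ = T_i^#`: the diagonal coefficients `−1/[ρ]` and `−1/[−ρ]` of
`T_i` at `t` and `t'` add up to `q − q⁻¹`. -/
lemma neg_inv_qint_neg (hq : q ≠ 0) {k : ℤ} (hk : qint q k.natAbs ≠ 0) :
    -(qint q (-k))⁻¹ = (qint q k)⁻¹ + (q - q⁻¹) := by
  have key : ∀ m : ℕ, qint q (m + 1 : ℕ) ≠ 0 →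
      (qint q (Int.negSucc m))⁻¹ + (qint q (m + 1 : ℕ))⁻¹ + (q - q⁻¹) = 0 := by
    intro m hm
    have h := sub_one_mul_qint q (m + 1)
    rw [qint_negSucc q hq]
    field_simp
    linear_combination h
  rcases k with (_ | m) | m
  · simp [qint] at hk
  · change -(qint q (Int.negSucc m))⁻¹ = (qint q (m + 1 : ℕ))⁻¹ + (q - q⁻¹)
    linear_combination -key m hk
  · change -(qint q (m + 1 : ℕ))⁻¹ = (qint q (Int.negSucc m))⁻¹ + (q - q⁻¹)
    linear_combination -key m hk

lemma alph_neg (sqm1 : F) (sq : ℕ → F) (m : ℤ) :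
    alph q sqm1 sq (-m) = -alph q sqm1 sq m := by
  rcases lt_trichotomy m 0 with hm | rfl | hm
  · simp [alph, hm.le, hm.not_ge]
  · simp [alph, qint]
  · simp [alph, hm.le, hm.not_ge]

end QuantumIntegers

lemma YoungDiagram.rowLen_zero_add_colLen_zero_le (μ : YoungDiagram) :
    μ.rowLen 0 + μ.colLen 0 ≤ μ.card + 1 := by
  have hsub : μ.row 0 ∪ μ.col 0 ⊆ μ.cells := by
    intro x hx
    rcases Finset.mem_union.mp hx with hx | hx
    · exact (μ.mem_cells _).mpr (YoungDiagram.mem_row_iff.mp hx).1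
    · exact (μ.mem_cells _).mpr (YoungDiagram.mem_col_iff.mp hx).1
  have hinter : (μ.row 0 ∩ μ.col 0).card ≤ 1 := by
    refine Finset.card_le_one.mpr fun x hx y hy => ?_
    rw [Finset.mem_inter, YoungDiagram.mem_row_iff, YoungDiagram.mem_col_iff] at hx hy
    exact Prod.ext (hx.1.2.trans hy.1.2.symm) (hx.2.2.trans hy.2.2.symm)
  have := Finset.card_union_add_card_inter (μ.row 0) (μ.col 0)
  have := Finset.card_le_card hsub
  rw [μ.rowLen_eq_card, μ.colLen_eq_card, YoungDiagram.card]
  omega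

namespace StdTab

variable {μ : YoungDiagram} {n : ℕ}

instance : Finite (StdTab μ n) :=
  Finite.of_injective (fun t k => (⟨t.val k, (μ.mem_cells _).mpr (t.prop.2.1 k)⟩ : μ.cells))
    fun _ _ h => Subtype.ext <| funext fun k => congrArg Subtype.val (congrFun h k)

noncomputable instance : Fintype (StdTab μ n) := Fintype.ofFinite _

lemma le_of_le (t : StdTab μ n) {j k : Fin n} (h₁ : (t.val j).1 ≤ (t.val k).1)
    (h₂ : (t.val j).2 ≤ (t.val k).2) : j ≤ k := by
  rcases eq_or_ne j k with rfl | hjk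
  · exact le_rfl
  · exact (t.prop.2.2 j k h₁ h₂ (t.prop.1.ne hjk)).le

lemma exists_eq (hμ : μ.card = n) (t : StdTab μ n) {c : ℕ × ℕ} (hc : c ∈ μ) :
    ∃ k, t.val k = c := by
  let f : Fin n → μ.cells := fun k => ⟨t.val k, (μ.mem_cells _).mpr (t.prop.2.1 k)⟩
  have hf : Function.Bijective f := (Fintype.bijective_iff_injective_and_card f).mpr
    ⟨fun _ _ h => t.prop.1 (congrArg Subtype.val h), by simp [← hμ, YoungDiagram.card]⟩
  obtain ⟨k, hk⟩ := hf.2 ⟨c, (μ.mem_cells _).mpr hc⟩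
  exact ⟨k, congrArg Subtype.val hk⟩

lemma exists_le_eq (hμ : μ.card = n) (t : StdTab μ n) {r c : ℕ} (k : Fin n)
    (hr : r ≤ (t.val k).1) (hc : c ≤ (t.val k).2) : ∃ j ≤ k, t.val j = (r, c) := by
  obtain ⟨j, hj⟩ := t.exists_eq hμ (μ.up_left_mem hr hc (t.prop.2.1 k))
  exact ⟨j, t.le_of_le (by rw [hj]; exact hr) (by rw [hj]; exact hc), hj⟩

lemma val_zero (hμ : μ.card = n) (hn : 1 ≤ n) (t : StdTab μ n) :
    t.val ⟨0, hn⟩ = (0, 0) := by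
  obtain ⟨j, hj, hjt⟩ := t.exists_le_eq hμ ⟨0, hn⟩ (Nat.zero_le _) (Nat.zero_le _)
  obtain rfl : j = ⟨0, hn⟩ := Fin.ext (Nat.le_zero.mp hj)
  exact hjt

lemma val_one (hμ : μ.card = n) (hn : 2 ≤ n) (t : StdTab μ n) :
    t.val ⟨1, hn⟩ = (0, 1) ∨ t.val ⟨1, hn⟩ = (1, 0) := by
  have h₀ := t.val_zero hμ (by omega)
  have hne : t.val ⟨1, hn⟩ ≠ (0, 0) := fun h =>
    absurd (t.prop.1 (h.trans h₀.symm)) (by simp [Fin.ext_iff])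
  -- a cell `d ≠ (0, 0)` weakly above-left of the entry `2` holds an entry `≤ 2`, hence `2`
  have key : ∀ d : ℕ × ℕ, d ≠ (0, 0) → d.1 ≤ (t.val ⟨1, hn⟩).1 → d.2 ≤ (t.val ⟨1, hn⟩).2 →
      t.val ⟨1, hn⟩ = d := by
    intro d hd h₁ h₂
    obtain ⟨j, hj, hjd⟩ := t.exists_le_eq hμ ⟨1, hn⟩ h₁ h₂
    have hj : j.val ≤ 1 := hj
    rcases hj.lt_or_eq with hj | hj
    · rw [show j = ⟨0, by omega⟩ from Fin.ext (Nat.lt_one_iff.mp hj)] at hjd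
      exact absurd (hjd.symm.trans h₀) hd
    · obtain rfl : j = ⟨1, hn⟩ := Fin.ext hj
      exact hjd
  generalize t.val ⟨1, hn⟩ = b at hne key ⊢
  obtain ⟨r, c⟩ := b
  rcases Nat.eq_zero_or_pos r with rfl | hr
  · left
    exact key (0, 1) (by simp) le_rfl (by simp_all; omega)
  · right
    exact key (1, 0) (by simp) hr (Nat.zero_le _)

lemma rhoAx_ne_zero (hμ : μ.card = n) (t : StdTab μ n) (i : ℕ) (hi : i + 1 < n) :
    rhoAx t.val i hi ≠ 0 := by
  intro h
  obtain ⟨r₁, c₁, ha⟩ : ∃ r c, t.val ⟨i, Nat.lt_of_succ_lt hi⟩ = (r, c) := ⟨_, _, rfl⟩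
  obtain ⟨r₂, c₂, hb⟩ : ∃ r c, t.val ⟨i + 1, hi⟩ = (r, c) := ⟨_, _, rfl⟩
  have hab : (r₁, c₁) ≠ (r₂, c₂) := ha ▸ hb ▸ t.prop.1.ne (by simp [Fin.ext_iff])
  simp only [rhoAx, ha, hb] at h
  rcases le_or_gt r₁ r₂ with hr | hr
  · -- equal contents put the entry `i + 2` strictly below and right of `i + 1`, so the
    -- cell just right of `i + 1` would have to hold an entry strictly between them
    have hr : r₁ < r₂ := hr.lt_of_ne fun hr => hab (by simp only [Prod.mk.injEq]; omega)
    obtain ⟨j, hj, hjc⟩ := t.exists_le_eq hμ ⟨i + 1, hi⟩ (r := r₁) (c := c₁ + 1)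
      (by rw [hb]; exact hr.le) (by rw [hb]; omega)
    have hij : (⟨i, Nat.lt_of_succ_lt hi⟩ : Fin n) ≤ j :=
      t.le_of_le (by rw [hjc, ha]) (by rw [hjc, ha]; omega)
    have hji : j ≠ ⟨i, Nat.lt_of_succ_lt hi⟩ := fun hj => by
      rw [hj, ha] at hjc; simp at hjc
    have hji' : j ≠ ⟨i + 1, hi⟩ := fun hj => by
      rw [hj, hb] at hjc; simp only [Prod.mk.injEq] at hjc; omega
    simp only [Fin.le_def, ne_eq, Fin.ext_iff] at hj hij hji hji'
    omega
  · have := t.le_of_le (j := ⟨i + 1, hi⟩) (k := ⟨i, Nat.lt_of_succ_lt hi⟩)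
      (by rw [ha, hb]; exact hr.le) (by rw [ha, hb]; omega)
    simp [Fin.le_def] at this

lemma natAbs_rhoAx_le (hμ : μ.card = n) (t : StdTab μ n) (i : ℕ) (hi : i + 1 < n) :
    (rhoAx t.val i hi).natAbs ≤ n := by
  have hbound : ∀ k, (t.val k).2 < μ.rowLen 0 ∧ (t.val k).1 < μ.colLen 0 := fun k =>
    ⟨YoungDiagram.mem_iff_lt_rowLen.mp (μ.up_left_mem (Nat.zero_le _) le_rfl (t.prop.2.1 k)),
      YoungDiagram.mem_iff_lt_colLen.mp (μ.up_left_mem le_rfl (Nat.zero_le _) (t.prop.2.1 k))⟩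
  have := μ.rowLen_zero_add_colLen_zero_le
  have h₁ := hbound ⟨i, Nat.lt_of_succ_lt hi⟩
  have h₂ := hbound ⟨i + 1, hi⟩
  simp only [rhoAx]
  omega

end StdTab

section Conjugation

variable {μ : YoungDiagram} {n : ℕ}

lemma rhoAx_conjPos (pos : Fin n → ℕ × ℕ) (i : ℕ) (hi : i + 1 < n) :
    rhoAx (conjPos pos) i hi = -rhoAx pos i hi := by
  simp only [rhoAx, conjPos]
  ring

lemma swapEnt_conjPos (pos : Fin n → ℕ × ℕ) (i : ℕ) (hi : i + 1 < n) :
    swapEnt (conjPos pos) i hi = conjPos (swapEnt pos i hi) := rfl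

lemma isStdTab_conjPos_iff (hself : μ.transpose = μ) {pos : Fin n → ℕ × ℕ} :
    IsStdTab μ (conjPos pos) ↔ IsStdTab μ pos :=
  ⟨fun h => hself ▸ isStdTab_conj h, fun h => hself ▸ isStdTab_conj h⟩

lemma selfConjTab_selfConjTab (hself : μ.transpose = μ) (t : StdTab μ n) :
    selfConjTab hself (selfConjTab hself t) = t := rfl

lemma selfConjTab_involutive (hself : μ.transpose = μ) :
    Function.Involutive (selfConjTab hself (n := n)) :=
  selfConjTab_selfConjTab hself

variable {F : Type*} [Field F]

lemma selfTau_single (hself : μ.transpose = μ) (t : StdTab μ n) (a : F) :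
    selfTau hself n (Pi.single t a) = Pi.single (selfConjTab hself t) a := by
  ext s
  simp only [selfTau, LinearMap.coe_mk, AddHom.coe_mk, Pi.single_apply,
    (selfConjTab_involutive hself).eq_iff.symm]

lemma selfTau_mul_self (hself : μ.transpose = μ) :
    (selfTau hself n : Module.End F (StdTab μ n → F)) * selfTau hself n = 1 :=
  LinearMap.ext fun _ => rfl

end Conjugation

section Eigenspaces

variable {F : Type*} [Field F] {μ : YoungDiagram} {n : ℕ}

lemma fst_selfConjTab_val_one_eq_zero_iff (hμ : μ.card = n) (hself : μ.transpose = μ)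
    (hn : 2 ≤ n) (t : StdTab μ n) :
    ((selfConjTab hself t).val ⟨1, hn⟩).1 = 0 ↔ ¬ (t.val ⟨1, hn⟩).1 = 0 := by
  change (t.val ⟨1, hn⟩).2 = 0 ↔ _
  rcases t.val_one hμ hn with h | h <;> simp [h]

lemma span_eq_eigenspace_selfTau (hμ : μ.card = n) (hself : μ.transpose = μ) (hn : 2 ≤ n)
    {ε : F} (hε : ε * ε = 1) :
    Submodule.span F {x : StdTab μ n → F | ∃ t : StdTab μ n, (t.val ⟨1, hn⟩).1 = 0 ∧
        x = Pi.single t 1 + ε • Pi.single (selfConjTab hself t) 1} =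
      Module.End.eigenspace (selfTau hself n) ε := by
  refine le_antisymm (Submodule.span_le.mpr ?_) fun x hx => ?_
  · rintro _ ⟨t, -, rfl⟩
    rw [SetLike.mem_coe, Module.End.mem_eigenspace_iff, map_add, map_smul, selfTau_single,
      selfTau_single, selfConjTab_selfConjTab, smul_add, smul_smul, hε, one_smul, add_comm]
  have hx' : ∀ t, x (selfConjTab hself t) = ε * x t := fun t =>
    congrFun (Module.End.mem_eigenspace_iff.mp hx) t
  let P := Finset.univ.filter fun t : StdTab μ n => (t.val ⟨1, hn⟩).1 = 0
  have hP : P.image (selfConjTab hself) = Finset.univ.filter fun t => ¬ (t.val ⟨1, hn⟩).1 = 0 := by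
    ext s
    simp only [P, Finset.mem_image, Finset.mem_filter, Finset.mem_univ, true_and]
    refine ⟨?_, fun hs => ⟨selfConjTab hself s, ?_, selfConjTab_selfConjTab hself s⟩⟩
    · rintro ⟨t, ht, rfl⟩
      exact fun h => (fst_selfConjTab_val_one_eq_zero_iff hμ hself hn t).mp h ht
    · exact (fst_selfConjTab_val_one_eq_zero_iff hμ hself hn s).mpr hs
  rw [← Finset.univ_sum_single x, ← Finset.sum_filter_add_sum_filter_not _
    fun t : StdTab μ n => (t.val ⟨1, hn⟩).1 = 0, ← hP,
    Finset.sum_image fun a _ b _ h => (selfConjTab_involutive hself).injective h,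
    ← Finset.sum_add_distrib]
  refine Submodule.sum_mem _ fun t ht => ?_
  have hcomb : Pi.single t (x t) + Pi.single (selfConjTab hself t) (x (selfConjTab hself t)) =
      x t • (Pi.single t 1 + ε • Pi.single (selfConjTab hself t) (1 : F)) := by
    ext s
    simp only [hx', Pi.add_apply, Pi.smul_apply, Pi.single_apply, smul_eq_mul]
    split_ifs <;> ring
  rw [hcomb]
  exact Submodule.smul_mem _ _ (Submodule.subset_span ⟨t, (Finset.mem_filter.mp ht).2, rfl⟩)

end Eigenspaces

section CoxeterLength

variable {n : ℕ}

lemma sTr_mul_self (i : ℕ) : sTr n i * sTr n i = 1 := by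
  unfold sTr
  split_ifs <;> simp

lemma sTr_inv (i : ℕ) : (sTr n i)⁻¹ = sTr n i :=
  inv_eq_of_mul_eq_one_left (sTr_mul_self i)

lemma exists_word (w : Equiv.Perm (Fin n)) :
    ∃ l : List ℕ, (∀ i ∈ l, i + 1 < n) ∧ w = (l.map (sTr n)).prod := by
  cases n with
  | zero => exact ⟨[], by simp, Subsingleton.elim _ _⟩
  | succ m =>
    have hw : w ∈ Submonoid.closure (Set.range fun i : Fin m => Equiv.swap i.castSucc i.succ) := by
      rw [Equiv.Perm.mclosure_swap_castSucc_succ]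
      trivial
    induction hw using Submonoid.closure_induction with
    | mem x hx =>
      obtain ⟨i, rfl⟩ := hx
      refine ⟨[i.val], by simp, ?_⟩
      simp only [List.map_cons, List.map_nil, List.prod_cons, List.prod_nil, mul_one, sTr,
        dif_pos (Nat.succ_lt_succ i.isLt)]
      rfl
    | one => exact ⟨[], by simp, rfl⟩
    | mul x y _ _ hx hy =>
      obtain ⟨lx, hlx, rfl⟩ := hx
      obtain ⟨ly, hly, rfl⟩ := hy
      exact ⟨lx ++ ly, fun i hi => (List.mem_append.mp hi).elim (hlx i) (hly i), by simp⟩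

lemma exists_reduced_word (w : Equiv.Perm (Fin n)) :
    ∃ l : List ℕ, l.length = len n w ∧ (∀ i ∈ l, i + 1 < n) ∧ w = (l.map (sTr n)).prod := by
  obtain ⟨l, hl, hw⟩ := exists_word w
  exact Nat.sInf_mem (s := {k | ∃ l : List ℕ, l.length = k ∧ (∀ i ∈ l, i + 1 < n) ∧
    w = (l.map (sTr n)).prod}) ⟨l.length, l, rfl, hl, hw⟩

lemma len_prod_le_length {l : List ℕ} (hl : ∀ i ∈ l, i + 1 < n) :
    len n (l.map (sTr n)).prod ≤ l.length :=
  Nat.sInf_le ⟨l, rfl, hl, rfl⟩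

lemma len_one : len n 1 = 0 :=
  Nat.le_zero.mp (len_prod_le_length (l := []) (by simp))

lemma len_sTr {i : ℕ} (hi : i + 1 < n) : len n (sTr n i) = 1 := by
  obtain ⟨l, hl, -, hw⟩ := exists_reduced_word (sTr n i)
  have hle : len n (sTr n i) ≤ 1 := by
    simpa using len_prod_le_length (l := [i]) (by simpa using hi)
  have hne : l ≠ [] := by
    rintro rfl
    simp [sTr, hi, Equiv.swap_eq_one_iff, Fin.ext_iff] at hw
  have := List.length_pos_iff.mpr hne
  omega

lemma len_mul_sTr_le (w : Equiv.Perm (Fin n)) {i : ℕ} (hi : i + 1 < n) :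
    len n (w * sTr n i) ≤ len n w + 1 := by
  obtain ⟨l, hl, hli, rfl⟩ := exists_reduced_word w
  have := len_prod_le_length (l := l ++ [i])
    fun j hj => (List.mem_append.mp hj).elim (hli j) (by simpa using (· ▸ hi))
  simpa [hl] using this

end CoxeterLength

lemma map_eq_conj_of_mem_adjoin {R A M : Type*} [CommRing R] [Ring A] [Algebra R A]
    [AddCommGroup M] [Module R M] {s : Set A} (ρ : A →ₗ[R] Module.End R M) (hρ₁ : ρ 1 = 1)
    (hρ : ∀ a b, ρ (a * b) = ρ b * ρ a) (φ : A →ₐ[R] A) {τ : Module.End R M} (hτ : τ * τ = 1)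
    (hs : ∀ x ∈ s, ρ (φ x) = τ * ρ x * τ) {x : A} (hx : x ∈ Algebra.adjoin R s) :
    ρ (φ x) = τ * ρ x * τ := by
  induction hx using Algebra.adjoin_induction with
  | mem x hx => exact hs x hx
  | algebraMap r =>
    rw [AlgHom.commutes, Algebra.algebraMap_eq_smul_one, map_smul, hρ₁, mul_smul_comm,
      smul_mul_assoc, mul_one, hτ]
  | add x y _ _ hx hy => rw [map_add, map_add, hx, hy, map_add, mul_add, add_mul]
  | mul x y _ _ hx hy =>
    rw [map_mul, hρ, hρ, hy, hx]
    simp only [← mul_assoc]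
    rw [mul_assoc _ τ τ, hτ, mul_one]

section Hecke

variable {F : Type*} [Field F] {n : ℕ} {H : Type*} [Ring H] [Algebra F H]
  {T : Equiv.Perm (Fin n) → H}

lemma T_mem_adjoin (hT1 : T 1 = 1)
    (hmul1 : ∀ (w : Equiv.Perm (Fin n)) (i : ℕ), i + 1 < n →
      len n (w * sTr n i) = len n w + 1 → T w * T (sTr n i) = T (w * sTr n i))
    (w : Equiv.Perm (Fin n)) :
    T w ∈ Algebra.adjoin F ((fun i => T (sTr n i)) '' {i | i + 1 < n}) := by
  obtain ⟨l, hlen, hl, rfl⟩ := exists_reduced_word w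
  induction l using List.reverseRecOn with
  | nil => simp [hT1]
  | append_singleton L i ih =>
    simp only [List.mem_append, List.mem_singleton] at hl
    have hi : i + 1 < n := hl i (Or.inr rfl)
    have hL : ∀ j ∈ L, j + 1 < n := fun j hj => hl j (Or.inl hj)
    rw [List.map_append, List.prod_append] at hlen ⊢
    simp only [List.map_cons, List.map_nil, List.prod_cons, List.prod_nil, mul_one,
      List.length_append, List.length_singleton] at hlen ⊢
    -- a prefix of a reduced word is reduced
    have hLlen := len_prod_le_length hL
    have := len_mul_sTr_le (L.map (sTr n)).prod hi
    rw [← hmul1 _ i hi (by omega)]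
    exact Subalgebra.mul_mem _ (ih hL (by omega)) (Algebra.subset_adjoin ⟨i, hi, rfl⟩)

lemma inverse_eq_sub_of_mul_self_eq {x : H} {c : F} (h : x * x = 1 + c • x) :
    Ring.inverse x = x - c • 1 := by
  let u : Hˣ :=
    { val := x
      inv := x - c • 1
      val_inv := by rw [mul_sub, h, mul_smul_comm, mul_one, add_sub_cancel_right]
      inv_val := by rw [sub_mul, h, smul_mul_assoc, one_mul, add_sub_cancel_right] }
  exact Ring.inverse_unit u

variable (q : F)

lemma T_sTr_mul_self (hT1 : T 1 = 1)
    (hmul2 : ∀ (w : Equiv.Perm (Fin n)) (i : ℕ), i + 1 < n →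
      len n (w * sTr n i) + 1 = len n w →
      T w * T (sTr n i) = T (w * sTr n i) + (q - q⁻¹) • T w)
    {i : ℕ} (hi : i + 1 < n) :
    T (sTr n i) * T (sTr n i) = 1 + (q - q⁻¹) • T (sTr n i) := by
  rw [hmul2 _ i hi (by rw [sTr_mul_self, len_one, len_sTr hi]), sTr_mul_self, hT1]

lemma hash_T_sTr (hash : H ≃ₐ[F] H)
    (hhash : ∀ w, hash (T w) = ((-1 : F) ^ len n w) • Ring.inverse (T w⁻¹))
    {i : ℕ} (hi : i + 1 < n) (hquad : T (sTr n i) * T (sTr n i) = 1 + (q - q⁻¹) • T (sTr n i)) :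
    hash (T (sTr n i)) = (q - q⁻¹) • 1 - T (sTr n i) := by
  rw [hhash, sTr_inv, len_sTr hi, inverse_eq_sub_of_mul_self_eq hquad, pow_one, neg_one_smul,
    neg_sub]

end Hecke

section SpechtModule

variable {F : Type*} [Field F] (q : F) {n : ℕ} {sqm1 : F} {sq : ℕ → F}
  {H : Type*} [Ring H] [Algebra F H] {T : Equiv.Perm (Fin n) → H} {μ : YoungDiagram}
  {act : H →ₗ[F] Module.End F (StdTab μ n → F)}

/-- The right-hand side is `T_i^#` (see `hash_T_sTr`). -/
lemma selfTau_mul_act_T_sTr_mul_selfTau (hq0 : q ≠ 0)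
    (hqint : ∀ k : ℕ, 1 ≤ k → k ≤ n → qint q (k : ℤ) ≠ 0)
    (hμ : μ.card = n) (hself : μ.transpose = μ) (hact : SpechtRep q sqm1 sq n T μ act)
    {i : ℕ} (hi : i + 1 < n) :
    selfTau hself n * act (T (sTr n i)) * selfTau hself n =
      (q - q⁻¹) • 1 - act (T (sTr n i)) := by
  refine (Pi.basisFun F (StdTab μ n)).ext fun t => ?_
  rw [Pi.basisFun_apply]
  set t' := selfConjTab hself t
  have hρ : rhoAx t'.val i hi = -rhoAx t.val i hi := rhoAx_conjPos t.val i hi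
  have hdiag := neg_inv_qint_neg q hq0 (k := rhoAx t.val i hi) <| hqint _
    (Int.natAbs_pos.mpr (t.rhoAx_ne_zero hμ i hi)) (t.natAbs_rhoAx_le hμ i hi)
  simp only [Module.End.mul_apply, LinearMap.sub_apply, LinearMap.smul_apply,
    Module.End.one_apply, selfTau_single]
  rw [hact.2.2 i hi t', hact.2.2 i hi t, map_add, map_smul, selfTau_single,
    selfConjTab_selfConjTab, hρ, hdiag]
  by_cases hC : IsStdTab μ (swapEnt t.val i hi)
  · have hC' : IsStdTab μ (swapEnt t'.val i hi) :=
      (swapEnt_conjPos t.val i hi).symm ▸ (isStdTab_conjPos_iff hself).mpr hC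
    rw [dif_pos hC', dif_pos hC, map_smul,
      selfTau_single (F := F) hself (⟨swapEnt t'.val i hi, hC'⟩ : StdTab μ n), alph_neg]
    change _ + _ • (Pi.single (⟨swapEnt t.val i hi, hC⟩ : StdTab μ n) (1 : F) : StdTab μ n → F) = _
    module
  · have hC' : ¬ IsStdTab μ (swapEnt t'.val i hi) := fun h =>
      hC ((isStdTab_conjPos_iff hself).mp ((swapEnt_conjPos t.val i hi) ▸ h))
    rw [dif_neg hC', dif_neg hC, map_zero]
    module

lemma act_hash_T (hq0 : q ≠ 0)
    (hqint : ∀ k : ℕ, 1 ≤ k → k ≤ n → qint q (k : ℤ) ≠ 0) (hT1 : T 1 = 1)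
    (hmul1 : ∀ (w : Equiv.Perm (Fin n)) (i : ℕ), i + 1 < n →
      len n (w * sTr n i) = len n w + 1 → T w * T (sTr n i) = T (w * sTr n i))
    (hmul2 : ∀ (w : Equiv.Perm (Fin n)) (i : ℕ), i + 1 < n →
      len n (w * sTr n i) + 1 = len n w →
      T w * T (sTr n i) = T (w * sTr n i) + (q - q⁻¹) • T w)
    (hash : H ≃ₐ[F] H)
    (hhash : ∀ w, hash (T w) = ((-1 : F) ^ len n w) • Ring.inverse (T w⁻¹))
    (hμ : μ.card = n) (hself : μ.transpose = μ) (hact : SpechtRep q sqm1 sq n T μ act)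
    (w : Equiv.Perm (Fin n)) :
    act (hash (T w)) = selfTau hself n * act (T w) * selfTau hself n := by
  refine map_eq_conj_of_mem_adjoin act hact.1 hact.2.1 hash.toAlgHom (selfTau_mul_self hself)
    ?_ (T_mem_adjoin hT1 hmul1 w)
  rintro _ ⟨i, hi, rfl⟩
  rw [selfTau_mul_act_T_sTr_mul_selfTau q hq0 hqint hμ hself hact hi]
  change act (hash (T (sTr n i))) = _
  rw [hash_T_sTr q hash hhash hi (T_sTr_mul_self q hT1 hmul2 hi), map_sub, map_smul, hact.1]

end SpechtModule

section Involution

variable {K V : Type*} [Field K] [AddCommGroup V] [Module K V] {τ f : Module.End K V}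

lemma commute_half_add_conj (hτ : τ * τ = 1) :
    Commute τ ((2 : K)⁻¹ • (f + τ * f * τ)) := by
  refine Commute.smul_right ?_ _
  have hτfτ : τ * (τ * f * τ) = f * τ := by rw [← mul_assoc, ← mul_assoc, hτ, one_mul]
  have hfττ : τ * f * τ * τ = τ * f := by rw [mul_assoc, hτ, mul_one]
  rw [Commute, SemiconjBy, mul_add, add_mul, hτfτ, hfττ, add_comm]

lemma mapsTo_eigenspace_half_add_conj (hτ : τ * τ = 1) (ε : K) :
    ∀ x ∈ Module.End.eigenspace τ ε,
      ((2 : K)⁻¹ • (f + τ * f * τ)) x ∈ Module.End.eigenspace τ ε :=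
  fun _ hx => Module.End.mapsTo_genEigenspace_of_comm (commute_half_add_conj hτ) ε 1 hx

/-- The trace is computed through the projection `½(1 + ετ)` onto the eigenspace. -/
lemma trace_restrict_eigenspace_half_add_conj [FiniteDimensional K V] (hτ : τ * τ = 1)
    {g : Module.End K V} (hg : g = (2 : K)⁻¹ • (f + τ * f * τ)) {ε : K} (hε : ε * ε = 1)
    {W : Submodule K V} (hW : W = Module.End.eigenspace τ ε) (hgW : ∀ x ∈ W, g x ∈ W) :
    LinearMap.trace K W (g.restrict hgW) =
      (2 : K)⁻¹ * (LinearMap.trace K V f + ε * LinearMap.trace K V (τ ∘ₗ f)) := by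
  subst hW hg
  rcases eq_or_ne (2 : K) 0 with h2 | h2
  · have : ((2 : K)⁻¹ • (f + τ * f * τ)).restrict hgW = 0 := by
      ext x
      simp [h2]
    rw [this, map_zero, h2, inv_zero, zero_mul]
  let p : Module.End K V := (2 : K)⁻¹ • (1 + ε • τ)
  have hp_mem : ∀ x, p x ∈ Module.End.eigenspace τ ε := fun x => by
    have hττ : τ (τ x) = x := by rw [← Module.End.mul_apply, hτ, Module.End.one_apply]
    rw [Module.End.mem_eigenspace_iff]
    simp only [p, LinearMap.smul_apply, LinearMap.add_apply, Module.End.one_apply, map_smul,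
      map_add, hττ]
    linear_combination (norm := module) hε • (-(2⁻¹ : K) • τ x)
  have hp_fix : ∀ x ∈ Module.End.eigenspace τ ε, p x = x := fun x hx => by
    rw [Module.End.mem_eigenspace_iff] at hx
    simp only [p, LinearMap.smul_apply, LinearMap.add_apply, Module.End.one_apply, hx,
      smul_smul, hε, one_smul, ← two_smul K x, inv_mul_cancel₀ h2]
  have hrestrict : ((2 : K)⁻¹ • (f + τ * f * τ)).restrict hgW =
      (p * ((2 : K)⁻¹ • (f + τ * f * τ))).restrict fun x _ => hp_mem _ := by
    ext x
    exact (hp_fix _ (hgW x x.2)).symm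
  have hpg : p * ((2 : K)⁻¹ • (f + τ * f * τ)) =
      ((2 : K)⁻¹ * (2 : K)⁻¹) • (f + τ * f * τ + ε • (τ * f) + ε • (f * τ)) := by
    have : τ * (τ * f * τ) = f * τ := by rw [← mul_assoc, ← mul_assoc, hτ, one_mul]
    simp only [p, smul_mul_assoc, mul_smul_comm, add_mul, one_mul, mul_add, this]
    module
  rw [hrestrict, LinearMap.trace_restrict_eq_of_forall_mem _ (p * _) fun x => hp_mem _, hpg]
  have hτfτ : LinearMap.trace K V (τ * f * τ) = LinearMap.trace K V f := by
    rw [LinearMap.trace_mul_comm, ← mul_assoc, hτ, one_mul]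
  simp only [map_smul, map_add, smul_eq_mul]
  rw [hτfτ, LinearMap.trace_mul_comm K f τ, Module.End.mul_eq_comp]
  field_simp
  ring

end Involution

/-- Corollary `SplitCharacters`: for a self-conjugate `λ = λ'` and an
even permutation `w ∈ 𝔄ₙ`, `χ^{λ±}_𝒜(A_w) = ½(χ^λ(T_w) ± χ^λ(T_w τ))`, where
`A_w = ½(T_w + T_w^#)`. -/
theorem split_characters_on_Aw
    {F : Type*} [Field F] (q : F) (hq0 : q ≠ 0) (n : ℕ)
    (hqint : ∀ k : ℕ, 1 ≤ k → k ≤ n → qint q (k : ℤ) ≠ 0)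
    -- the chosen square roots √(−1) and √([k]) in F
    (sqm1 : F)
    (sq : ℕ → F)
    {H : Type*} [Ring H] [Algebra F H]
    -- the Iwahori–Hecke algebra of type A with its basis of standard elements T_w
    (T : Equiv.Perm (Fin n) → H)
    (hT1 : T 1 = 1)
    (hmul1 : ∀ (w : Equiv.Perm (Fin n)) (i : ℕ), i + 1 < n →
      len n (w * sTr n i) = len n w + 1 → T w * T (sTr n i) = T (w * sTr n i))
    (hmul2 : ∀ (w : Equiv.Perm (Fin n)) (i : ℕ), i + 1 < n →
      len n (w * sTr n i) + 1 = len n w →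
      T w * T (sTr n i) = T (w * sTr n i) + (q - q⁻¹) • T w)
    -- the hash involution
    (hash : H ≃ₐ[F] H)
    (hhash : ∀ w, hash (T w) = ((-1 : F) ^ len n w) • Ring.inverse (T w⁻¹))
    -- the seminormal Specht module S(λ) for a self-conjugate λ
    (μ : YoungDiagram) (hμ : μ.card = n) (hself : μ.transpose = μ) (hn : 2 ≤ n)
    (act : H →ₗ[F] Module.End F (StdTab μ n → F))
    (hact : SpechtRep q sqm1 sq n T μ act)
    (Sp Sm : Submodule F (StdTab μ n → F))
    (hSp : Sp = Submodule.span F {x : StdTab μ n → F | ∃ t : StdTab μ n,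
        (t.val ⟨1, by omega⟩).1 = 0 ∧
        x = (Pi.single t (1 : F) : StdTab μ n → F)
              + (Pi.single (selfConjTab hself t) (1 : F) : StdTab μ n → F)})
    (hSm : Sm = Submodule.span F {x : StdTab μ n → F | ∃ t : StdTab μ n,
        (t.val ⟨1, by omega⟩).1 = 0 ∧
        x = (Pi.single t (1 : F) : StdTab μ n → F)
              - (Pi.single (selfConjTab hself t) (1 : F) : StdTab μ n → F)})
    (w : Equiv.Perm (Fin n)) :
    (∀ x ∈ Sp, act ((2 : F)⁻¹ • (T w + hash (T w))) x ∈ Sp) ∧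
    (∀ x ∈ Sm, act ((2 : F)⁻¹ • (T w + hash (T w))) x ∈ Sm) ∧
    (∀ hp : ∀ x ∈ Sp, act ((2 : F)⁻¹ • (T w + hash (T w))) x ∈ Sp,
      LinearMap.trace F Sp ((act ((2 : F)⁻¹ • (T w + hash (T w)))).restrict hp)
        = (2 : F)⁻¹ * (LinearMap.trace F (StdTab μ n → F) (act (T w))
            + LinearMap.trace F (StdTab μ n → F) ((selfTau hself n) ∘ₗ (act (T w))))) ∧
    (∀ hm : ∀ x ∈ Sm, act ((2 : F)⁻¹ • (T w + hash (T w))) x ∈ Sm,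
      LinearMap.trace F Sm ((act ((2 : F)⁻¹ • (T w + hash (T w)))).restrict hm)
        = (2 : F)⁻¹ * (LinearMap.trace F (StdTab μ n → F) (act (T w))
            - LinearMap.trace F (StdTab μ n → F) ((selfTau hself n) ∘ₗ (act (T w))))) := by
  have hτ := selfTau_mul_self (F := F) (n := n) hself
  have hA : act ((2 : F)⁻¹ • (T w + hash (T w))) =
      (2 : F)⁻¹ • (act (T w) + selfTau hself n * act (T w) * selfTau hself n) := by
    rw [map_smul, map_add,
      act_hash_T q hq0 hqint hT1 hmul1 hmul2 hash hhash hμ hself hact w]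
  have hSp' : Sp = Module.End.eigenspace (selfTau hself n) 1 := by
    rw [hSp, ← span_eq_eigenspace_selfTau hμ hself hn (one_mul 1)]
    simp only [one_smul]
  have hSm' : Sm = Module.End.eigenspace (selfTau hself n) (-1) := by
    rw [hSm, ← span_eq_eigenspace_selfTau hμ hself hn (by norm_num)]
    simp only [neg_one_smul, sub_eq_add_neg]
  refine ⟨?_, ?_, fun hp => ?_, fun hm => ?_⟩
  · rw [hA, hSp']
    exact mapsTo_eigenspace_half_add_conj hτ 1
  · rw [hA, hSm']
    exact mapsTo_eigenspace_half_add_conj hτ (-1)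
  · rw [trace_restrict_eigenspace_half_add_conj hτ hA (one_mul 1) hSp' hp, one_mul]
  · rw [trace_restrict_eigenspace_half_add_conj hτ hA (by norm_num) hSm' hm, neg_one_mul,
      ← sub_eq_add_neg]

end
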